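/- (Exchange lemma.) Let σ be a greedy ordering of E and τ an ordering of E with τ ≠ σ, let i_max be the largest position with σ(i_max) ≠ τ(i_max), let j be the unique position with τ(j) = σ(i_max), and let τ' be the ordering obtained from τ by the exchange move. Then the commonality index of τ' is at most that of τ: c(τ') ≤ c(τ). -/

import Mathlib

/-- Effective commonality of position `i` in ordering `σ`:
`W_σ(i) = ∑_{j < i} w(σ i, σ j)`. -/
noncomputable def effComm {E : Type*} {n : ℕ} (w : E → E → ℝ) (σ : Fin n ≃ E)
    (i : Fin n) : ℝ :=
  ∑ j ∈ Finset.Iio i, w (σ i) (σ j)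

/-- Commonality index of ordering `σ`: the maximum effective commonality
over all positions (equal to `0` when `n = 0`). -/
noncomputable def commIdx {E : Type*} {n : ℕ} (w : E → E → ℝ) (σ : Fin n ≃ E) : ℝ :=
  ⨆ i : Fin n, effComm w σ i

/-- `σ` is a greedy ordering: for every position `i` and every element `e` of
the prefix set `S_i = {σ j : j ≤ i}`, we have
`W_σ(i) ≤ ∑_{e' ∈ S_i, e' ≠ e} w(e, e')`. -/
def Greedy {E : Type*} {n : ℕ} [DecidableEq E] (w : E → E → ℝ) (σ : Fin n ≃ E) : Prop :=
  ∀ i : Fin n, ∀ e ∈ (Finset.Iic i).image σ,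
    effComm w σ i ≤ ∑ e' ∈ ((Finset.Iic i).image σ).erase e, w e e'

/-! Passing from `τ` to `τ'`, every element other than `σ imax` keeps its position or moves one
place earlier, so whatever precedes it in `τ'` already precedes it in `τ`; with nonnegative weights
its effective commonality can only drop. The element `σ imax`, placed at `imax`, is preceded in `τ'`
by exactly its prefix in `σ`, and greediness of `σ` at `imax`, applied to the element `τ imax` of
the prefix set that `σ` and `τ` share, bounds its commonality by that of `τ imax` in `τ`. -/

open Finset

section Ordering

variable {E : Type*} {n : ℕ}

lemma effComm_eq_sum_image [DecidableEq E] (w : E → E → ℝ) (σ : Fin n ≃ E) (i : Fin n) :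
    effComm w σ i = ∑ e ∈ (Iio i).image σ, w (σ i) e :=
  (sum_image fun _ _ _ _ h => σ.injective h).symm

lemma image_Iio_eq_erase_image_Iic [DecidableEq E] (σ : Fin n ≃ E) (i : Fin n) :
    (Iio i).image σ = ((Iic i).image σ).erase (σ i) := by
  rw [← Iio_insert, image_insert, erase_insert]
  simp only [mem_image, mem_Iio, not_exists, not_and]
  exact fun k hk h => hk.ne (σ.injective h)

lemma exists_le_apply_eq_of_eqOn_Ioi {σ τ : Fin n ≃ E} {k : Fin n}
    (h : ∀ l, k < l → σ l = τ l) {l : Fin n} (hl : l ≤ k) : ∃ l' ≤ k, σ l' = τ l := by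
  refine ⟨σ.symm (τ l), not_lt.1 fun hk => ?_, σ.apply_symm_apply _⟩
  have hτ : τ (σ.symm (τ l)) = τ l := by rw [← h _ hk, σ.apply_symm_apply]
  exact (τ.injective hτ ▸ hk).not_ge hl

lemma image_Iic_eq_of_eqOn_Ioi [DecidableEq E] {σ τ : Fin n ≃ E} {k : Fin n}
    (h : ∀ l, k < l → σ l = τ l) : (Iic k).image σ = (Iic k).image τ := by
  have hsub : ∀ {σ τ : Fin n ≃ E}, (∀ l, k < l → σ l = τ l) →
      (Iic k).image τ ⊆ (Iic k).image σ := by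
    intro σ τ h e he
    obtain ⟨l, hl, rfl⟩ := mem_image.1 he
    obtain ⟨l', hl', hσ⟩ := exists_le_apply_eq_of_eqOn_Ioi h (mem_Iic.1 hl)
    exact mem_image.2 ⟨l', mem_Iic.2 hl', hσ⟩
  exact (hsub fun l hl => (h l hl).symm).antisymm (hsub h)

variable (w : E → E → ℝ)

lemma effComm_le_of_forall_lt_exists_lt (hw : ∀ e e', 0 ≤ w e e') {σ τ : Fin n ≃ E}
    {i k : Fin n} (hik : σ i = τ k) (hlt : ∀ l < i, ∃ l' < k, σ l = τ l') :
    effComm w σ i ≤ effComm w τ k := by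
  classical
  rw [effComm_eq_sum_image, effComm_eq_sum_image, hik]
  refine sum_le_sum_of_subset_of_nonneg ?_ fun _ _ _ => hw _ _
  intro e he
  obtain ⟨l, hl, rfl⟩ := mem_image.1 he
  obtain ⟨l', hl', hσ⟩ := hlt l (mem_Iio.1 hl)
  exact mem_image.2 ⟨l', mem_Iio.2 hl', hσ.symm⟩

lemma Greedy.effComm_le_of_eqOn_Ioi [DecidableEq E] {σ τ : Fin n ≃ E} (hσ : Greedy w σ)
    {k : Fin n} (h : ∀ l, k < l → σ l = τ l) : effComm w σ k ≤ effComm w τ k := by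
  have hS := image_Iic_eq_of_eqOn_Ioi h
  have hmem : τ k ∈ (Iic k).image σ := hS ▸ mem_image_of_mem τ (mem_Iic.2 le_rfl)
  rw [effComm_eq_sum_image w τ, image_Iio_eq_erase_image_Iic, ← hS]
  exact hσ k (τ k) hmem

lemma commIdx_le_of_forall_exists_effComm_le {σ τ : Fin n ≃ E}
    (h : ∀ i, ∃ k, effComm w σ i ≤ effComm w τ k) : commIdx w σ ≤ commIdx w τ := by
  rcases isEmpty_or_nonempty (Fin n) with hn | hn
  · simp [commIdx]
  · refine ciSup_le fun i => ?_
    obtain ⟨k, hk⟩ := h i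
    exact hk.trans (le_ciSup (Set.finite_range _).bddAbove k)

end Ordering

lemma exchange_apply_eq {E : Type*} {n : ℕ} {τ τ' : Fin n ≃ E} {imax j : Fin n}
    (hτ'_lo : ∀ i : Fin n, i < j → τ' i = τ i)
    (hτ'_hi : ∀ i : Fin n, imax < i → τ' i = τ i)
    (hτ'_mid : ∀ i : Fin n, j ≤ i → ∀ h2 : i < imax,
      τ' i = τ ⟨(i : ℕ) + 1, Nat.lt_of_le_of_lt (Nat.succ_le_of_lt (Fin.lt_def.mp h2)) imax.isLt⟩)
    (hτ'_imax : τ' imax = τ j) (l : Fin n) :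
    ∃ m : Fin n, τ' l = τ m ∧ ((l < j ∧ m = l) ∨ (j ≤ l ∧ l < imax ∧ (m : ℕ) = l + 1) ∨
      (l = imax ∧ m = j) ∨ (imax < l ∧ m = l)) := by
  rcases lt_or_ge l j with hlj | hjl
  · exact ⟨l, hτ'_lo l hlj, .inl ⟨hlj, rfl⟩⟩
  rcases lt_trichotomy l imax with hl | rfl | hl
  · exact ⟨_, hτ'_mid l hjl hl, .inr (.inl ⟨hjl, hl, rfl⟩)⟩
  · exact ⟨j, hτ'_imax, .inr (.inr (.inl ⟨rfl, rfl⟩))⟩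
  · exact ⟨l, hτ'_hi l hl, .inr (.inr (.inr ⟨hl, rfl⟩))⟩

theorem commIdx_exchange_le_general
    {E : Type*} [DecidableEq E] {n : ℕ} (w : E → E → ℝ)
    (hw : ∀ e e', 0 ≤ w e e')
    (σ τ τ' : Fin n ≃ E) (hσ : Greedy w σ)
    (imax j : Fin n)
    (himax_max : ∀ i : Fin n, imax < i → σ i = τ i)
    (hj : τ j = σ imax)
    (hjlt : j < imax)
    (hτ'_lo : ∀ i : Fin n, i < j → τ' i = τ i)
    (hτ'_hi : ∀ i : Fin n, imax < i → τ' i = τ i)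
    (hτ'_mid : ∀ i : Fin n, j ≤ i → ∀ h2 : i < imax,
      τ' i = τ ⟨(i : ℕ) + 1, Nat.lt_of_le_of_lt (Nat.succ_le_of_lt (Fin.lt_def.mp h2)) imax.isLt⟩)
    (hτ'_imax : τ' imax = τ j) :
    commIdx w τ' ≤ commIdx w τ := by
  have hpos := exchange_apply_eq hτ'_lo hτ'_hi hτ'_mid hτ'_imax
  refine commIdx_le_of_forall_exists_effComm_le w fun i => ?_
  rcases eq_or_ne i imax with rfl | hi
  · -- `τ'` lists before `i` the elements of the common prefix set except `τ j = σ i`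
    refine ⟨i, (effComm_le_of_forall_lt_exists_lt w hw (hτ'_imax.trans hj) fun l hl => ?_).trans
      (hσ.effComm_le_of_eqOn_Ioi w himax_max)⟩
    obtain ⟨m, hm, hlm⟩ := hpos l
    have hmi : m ≤ i ∧ m ≠ j := by simp only [Fin.lt_def, Fin.le_def, Fin.ext_iff] at *; omega
    obtain ⟨l', hl', hσl'⟩ := exists_le_apply_eq_of_eqOn_Ioi himax_max hmi.1
    refine ⟨l', hl'.lt_of_ne ?_, hm.trans hσl'.symm⟩
    rintro rfl
    exact hmi.2 (τ.injective (hσl'.symm.trans hj.symm))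
  · obtain ⟨k, hk, hik⟩ := hpos i
    refine ⟨k, effComm_le_of_forall_lt_exists_lt w hw hk fun l hl => ?_⟩
    obtain ⟨m, hm, hlm⟩ := hpos l
    exact ⟨m, by simp only [Fin.lt_def, Fin.le_def, Fin.ext_iff, ne_eq] at *; omega, hm⟩

/-- Exchange lemma: if `σ` is greedy, `τ ≠ σ`, `imax` is the largest position where
`σ` and `τ` disagree, `j` is the (unique) position with `τ j = σ imax`, and `τ'` is
obtained from `τ` by the exchange move, then `c(τ') ≤ c(τ)`. -/
theorem commIdx_exchange_le
    {E : Type*} [DecidableEq E] {n : ℕ} (w : E → E → ℝ)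
    (hw : ∀ e e', 0 ≤ w e e')
    (σ τ τ' : Fin n ≃ E) (hσ : Greedy w σ) (hne : σ ≠ τ)
    (imax j : Fin n)
    (himax_ne : σ imax ≠ τ imax)
    (himax_max : ∀ i : Fin n, imax < i → σ i = τ i)
    (hj : τ j = σ imax)
    (hjlt : j < imax)
    (hτ'_lo : ∀ i : Fin n, i < j → τ' i = τ i)
    (hτ'_hi : ∀ i : Fin n, imax < i → τ' i = τ i)
    (hτ'_mid : ∀ i : Fin n, j ≤ i → ∀ h2 : i < imax,
      τ' i = τ ⟨(i : ℕ) + 1, Nat.lt_of_le_of_lt (Nat.succ_le_of_lt (Fin.lt_def.mp h2)) imax.isLt⟩)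
    (hτ'_imax : τ' imax = τ j) :
    commIdx w τ' ≤ commIdx w τ :=
  commIdx_exchange_le_general w hw σ τ τ' hσ imax j himax_max hj hjlt hτ'_lo hτ'_hi hτ'_mid hτ'_imax
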